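/- arXiv:2502.02052 — 7 statements merged into one kernel-verified Lean document; each statement's English description precedes it below -/
import Mathlib

section
/- Let F_n and F_{n+1} be invertible real 3×3 matrices with positive determinants and set f = F_{n+1} F_n^{-1}. Let b_n^e and b_{n+1}^e be real 3×3 matrices such that det(b_n^e) = (det F_n)^2 (isochoric plastic flow at step n) and such that the backward-Euler discretized trace flow condition tr(b_{n+1}^e) = tr(f b_n^e f^T) holds. Then tr((det F_{n+1})^{-2/3} · b_{n+1}^e) = tr(f̄ · b̄_n^e · f̄^T), where f̄ = (det f)^{-1/3} f and b̄_n^e = (det b_n^e)^{-1/3} b_n^e. In particular, for every μ > 0 the quantities μ̄_{n+1} = (μ/3)·tr((det F_{n+1})^{-2/3} b_{n+1}^e) and μ̄^{tr}_{n+1} = (μ/3)·tr(f̄ b̄_n^e f̄^T) coincide. -/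
/-- Proposition 1 (first half): under isochoric plastic flow at step `n` and the
backward-Euler discretized trace flow condition, the trace of the normalized elastic
left Cauchy–Green tensor equals the trace of its trial value, hence
`μ̄_{n+1} = μ̄^{tr}_{n+1}` for every shear modulus `μ > 0`. -/
theorem trace_normalized_be_eq_trial
    (Fn Fn1 bne bn1e f : Matrix (Fin 3) (Fin 3) ℝ)
    (hFn : 0 < Fn.det) (hFn1 : 0 < Fn1.det)
    (hf : f = Fn1 * Fn⁻¹)
    (hiso : bne.det = Fn.det ^ 2)
    (htr : bn1e.trace = (f * bne * f.transpose).trace) :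
    ((Fn1.det ^ (-(2 : ℝ)/3)) • bn1e).trace
      = (((f.det ^ (-(1 : ℝ)/3)) • f) * ((bne.det ^ (-(1 : ℝ)/3)) • bne)
          * ((f.det ^ (-(1 : ℝ)/3)) • f).transpose).trace
    ∧ ∀ μ : ℝ, 0 < μ →
        (μ / 3) * ((Fn1.det ^ (-(2 : ℝ)/3)) • bn1e).trace
          = (μ / 3) * (((f.det ^ (-(1 : ℝ)/3)) • f) * ((bne.det ^ (-(1 : ℝ)/3)) • bne)
              * ((f.det ^ (-(1 : ℝ)/3)) • f).transpose).trace := by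
  have hFninv : Fn⁻¹.det = Fn.det⁻¹ := by
    rw [Matrix.det_nonsing_inv, Ring.inverse_eq_inv]
  have hfdet : f.det = Fn1.det / Fn.det := by
    rw [hf, Matrix.det_mul, hFninv, div_eq_mul_inv]
  have h2 : bne.det ^ (-(1:ℝ)/3) = Fn.det ^ (-(2:ℝ)/3) := by
    rw [hiso, ← Real.rpow_natCast Fn.det 2, ← Real.rpow_mul hFn.le]
    norm_num
  have h1 : f.det ^ (-(1:ℝ)/3) = Fn1.det ^ (-(1:ℝ)/3) * Fn.det ^ ((1:ℝ)/3) := by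
    rw [hfdet, Real.div_rpow hFn1.le hFn.le,
      show (-(1:ℝ)/3) = -(1/3) by norm_num, Real.rpow_neg hFn.le, div_eq_mul_inv, inv_inv]
  have key : Fn1.det ^ (-(2 : ℝ)/3)
      = f.det ^ (-(1 : ℝ)/3) * (bne.det ^ (-(1 : ℝ)/3) * f.det ^ (-(1 : ℝ)/3)) := by
    rw [h1, h2]
    have hr : (Fn1.det ^ (-(1:ℝ)/3) * Fn.det ^ ((1:ℝ)/3)) *
        (Fn.det ^ (-(2:ℝ)/3) * (Fn1.det ^ (-(1:ℝ)/3) * Fn.det ^ ((1:ℝ)/3)))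
        = (Fn1.det ^ (-(1:ℝ)/3) * Fn1.det ^ (-(1:ℝ)/3)) *
          (Fn.det ^ ((1:ℝ)/3) * Fn.det ^ (-(2:ℝ)/3) * Fn.det ^ ((1:ℝ)/3)) := by ring
    rw [hr, ← Real.rpow_add hFn, ← Real.rpow_add hFn, ← Real.rpow_add hFn1]
    norm_num
  have main : ((Fn1.det ^ (-(2 : ℝ)/3)) • bn1e).trace
      = (((f.det ^ (-(1 : ℝ)/3)) • f) * ((bne.det ^ (-(1 : ℝ)/3)) • bne)
          * ((f.det ^ (-(1 : ℝ)/3)) • f).transpose).trace := by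
    simp only [Matrix.transpose_smul, Matrix.smul_mul, Matrix.mul_smul, smul_smul,
      Matrix.trace_smul, htr, key, smul_eq_mul]
  exact ⟨main, fun μ _ => by rw [main]⟩
end

section
/- Let F_n and F_{n+1} be invertible real 3×3 matrices with positive determinants, set f = F_{n+1} F_n^{-1} and f̄ = (det f)^{-1/3} f. Let β_n and β_{n+1} be real 3×3 matrices satisfying the backward-Euler discretized trace condition tr(β_{n+1}) = tr(f β_n f^T). Then tr((det F_{n+1})^{-2/3} · β_{n+1}) = tr(f̄ · ((det F_n)^{-2/3} β_n) · f̄^T); that is, the trace of the normalized back stress β̄_{n+1} = (det F_{n+1})^{-2/3} β_{n+1} equals the trace of its trial value β̄^{tr}_{n+1} = f̄ β̄_n f̄^T with β̄_n = (det F_n)^{-2/3} β_n. -/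
/-- Proposition 1 (second half): under the backward-Euler discretized trace condition
for the back stress, the trace of the normalized back stress `β̄_{n+1}` equals the
trace of its trial value `β̄^{tr}_{n+1} = f̄ β̄_n f̄ᵀ`. -/
theorem trace_normalized_backstress_eq_trial
    (Fn Fn1 βn βn1 f : Matrix (Fin 3) (Fin 3) ℝ)
    (hFn : 0 < Fn.det) (hFn1 : 0 < Fn1.det)
    (hf : f = Fn1 * Fn⁻¹)
    (htr : βn1.trace = (f * βn * f.transpose).trace) :
    ((Fn1.det ^ (-(2 : ℝ)/3)) • βn1).trace
      = (((f.det ^ (-(1 : ℝ)/3)) • f) * ((Fn.det ^ (-(2 : ℝ)/3)) • βn)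
          * ((f.det ^ (-(1 : ℝ)/3)) • f).transpose).trace := by
  have hdet : f.det = Fn1.det * Fn.det⁻¹ := by
    rw [hf, Matrix.det_mul, Matrix.det_nonsing_inv, Ring.inverse_eq_inv]
  have hfpos : 0 < f.det := by rw [hdet]; positivity
  have h1 : f.det ^ (-(1:ℝ)/3) * f.det ^ (-(1:ℝ)/3) = f.det ^ (-(2:ℝ)/3) := by
    rw [← Real.rpow_add hfpos]; norm_num
  have h2 : f.det ^ (-(2:ℝ)/3) = Fn1.det ^ (-(2:ℝ)/3) * Fn.det ^ ((2:ℝ)/3) := by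
    rw [hdet, Real.mul_rpow hFn1.le (inv_nonneg.2 hFn.le),
      ← Real.rpow_neg_one Fn.det, ← Real.rpow_mul hFn.le]
    norm_num
  have h3 : Fn.det ^ ((2:ℝ)/3) * Fn.det ^ (-(2:ℝ)/3) = 1 := by
    rw [← Real.rpow_add hFn]; norm_num
  have key : f.det ^ (-(1:ℝ)/3) * (Fn.det ^ (-(2:ℝ)/3) * f.det ^ (-(1:ℝ)/3))
      = Fn1.det ^ (-(2:ℝ)/3) := by
    calc f.det ^ (-(1:ℝ)/3) * (Fn.det ^ (-(2:ℝ)/3) * f.det ^ (-(1:ℝ)/3))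
        = (f.det ^ (-(1:ℝ)/3) * f.det ^ (-(1:ℝ)/3)) * Fn.det ^ (-(2:ℝ)/3) := by ring
      _ = Fn1.det ^ (-(2:ℝ)/3) * (Fn.det ^ ((2:ℝ)/3) * Fn.det ^ (-(2:ℝ)/3)) := by
          rw [h1, h2]; ring
      _ = Fn1.det ^ (-(2:ℝ)/3) := by rw [h3, mul_one]
  simp only [Matrix.transpose_smul, Matrix.smul_mul, Matrix.mul_smul, smul_smul,
    Matrix.trace_smul, htr, smul_eq_mul]
  rw [key]
end

section
/- Let E be a real normed vector space, let ξ, ξ^{tr} ∈ E with ξ ≠ 0, and let c ≥ 0 be a real number. If ξ = ξ^{tr} − c·(ξ/‖ξ‖), then ξ^{tr} ≠ 0, ‖ξ^{tr}‖ = ‖ξ‖ + c, and ξ/‖ξ‖ = ξ^{tr}/‖ξ^{tr}‖. -/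
/-- Radial-return collinearity: in a real normed vector space, if `ξ ≠ 0`, `c ≥ 0`
and `ξ = ξᵗʳ − c·(ξ/‖ξ‖)`, then `ξᵗʳ ≠ 0`, `‖ξᵗʳ‖ = ‖ξ‖ + c`, and
`ξ/‖ξ‖ = ξᵗʳ/‖ξᵗʳ‖`. -/
theorem radial_return_collinearity
    {E : Type*} [NormedAddCommGroup E] [NormedSpace ℝ E]
    (ξ ξtr : E) (hξ : ξ ≠ 0) (c : ℝ) (hc : 0 ≤ c)
    (h : ξ = ξtr - c • (‖ξ‖⁻¹ • ξ)) :
    ξtr ≠ 0 ∧ ‖ξtr‖ = ‖ξ‖ + c ∧ ‖ξ‖⁻¹ • ξ = ‖ξtr‖⁻¹ • ξtr := by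
  have hn : (0:ℝ) < ‖ξ‖ := norm_pos_iff.mpr hξ
  set a : ℝ := 1 + c * ‖ξ‖⁻¹ with ha
  have ha0 : 0 < a := by positivity
  have hxtr : ξtr = a • ξ := by
    have := h
    rw [eq_sub_iff_add_eq] at this
    rw [← this, smul_smul, ha]
    module
  have hnorm : ‖ξtr‖ = ‖ξ‖ + c := by
    rw [hxtr, norm_smul, Real.norm_of_nonneg ha0.le, ha]
    field_simp
  have hne : ξtr ≠ 0 := by
    intro h0
    rw [h0, norm_zero] at hnorm
    nlinarith
  refine ⟨hne, hnorm, ?_⟩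
  rw [hnorm, hxtr, smul_smul]
  congr 1
  rw [ha]
  field_simp
end

section
/- Let μ > 0, μ̄̄ > 0, h ≥ 0, let k : ℝ → ℝ be continuous and monotone nondecreasing, and let α^{tr}, x be real numbers such that f^{tr} := x − √(2/3)·k(α^{tr}) > 0. Define G(γ) = x − 2μ̄̄(1 + h/(3μ))·γ − √(2/3)·k(α^{tr} + √(2/3)·γ). Then G is strictly decreasing on ℝ, and there exists a unique real number γ̂ with G(γ̂) = 0; moreover γ̂ > 0. -/
/-!
Writing `G γ = x - c γ - φ γ` with `c = 2μ̄̄(1 + h/(3μ)) > 0` and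
`φ γ = √(2/3) k(αᵗʳ + √(2/3) γ)` nondecreasing, `G` is a strictly decreasing linear
function plus a nonincreasing one. At `γ = 0` it equals `fᵗʳ > 0`, and at `γ = fᵗʳ / c` the
linear part has cancelled `fᵗʳ`, leaving `φ 0 - φ γ ≤ 0`; the intermediate value theorem
gives a zero, strict monotonicity makes it unique and places it to the right of `0`.
-/

section ConsistencyFunction

variable {c : ℝ} {φ : ℝ → ℝ}

lemma strictAnti_sub_mul_sub_of_monotone (x : ℝ) (hc : 0 < c) (hφ : Monotone φ) :
    StrictAnti fun γ => x - c * γ - φ γ := by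
  intro a b hab
  have hφab := hφ hab.le
  have hcab := mul_lt_mul_of_pos_left hab hc
  dsimp only
  linarith

lemma exists_sub_mul_sub_eq_zero_of_monotone {x : ℝ} (hc : 0 < c) (hφ : Monotone φ)
    (hφc : Continuous φ) (hx : φ 0 < x) :
    ∃ γ, x - c * γ - φ γ = 0 := by
  set b := (x - φ 0) / c
  have hb : 0 ≤ b := div_nonneg (sub_nonneg.mpr hx.le) hc.le
  have hcb : c * b = x - φ 0 := mul_div_cancel₀ _ hc.ne'
  have hzero_mem : (0 : ℝ) ∈ Set.Icc (x - c * b - φ b) (x - c * 0 - φ 0) := by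
    constructor <;> linarith [hφ hb]
  obtain ⟨γ, -, hγ⟩ := intermediate_value_Icc' hb
    (f := fun γ => x - c * γ - φ γ) (by fun_prop : Continuous _).continuousOn hzero_mem
  exact ⟨γ, hγ⟩

end ConsistencyFunction

/-- Well-posedness of the return-mapping consistency equation for a general
continuous nondecreasing isotropic hardening function `k`: under plastic loading
(`fᵗʳ = x − √(2/3) k(αᵗʳ) > 0`), the function
`G(γ) = x − 2μ̄̄(1 + h/(3μ))γ − √(2/3) k(αᵗʳ + √(2/3)γ)` is strictly decreasing,
has a unique real zero `γ̂`, and this zero is positive. -/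
theorem return_mapping_well_posed
    (μ μbb h : ℝ) (hμ : 0 < μ) (hμbb : 0 < μbb) (hh : 0 ≤ h)
    (k : ℝ → ℝ) (hk_cont : Continuous k) (hk_mono : Monotone k)
    (αtr x : ℝ) (hftr : 0 < x - Real.sqrt (2/3) * k αtr)
    (G : ℝ → ℝ)
    (hG : ∀ γ : ℝ, G γ = x - 2 * μbb * (1 + h / (3 * μ)) * γ
        - Real.sqrt (2/3) * k (αtr + Real.sqrt (2/3) * γ)) :
    StrictAnti G ∧ (∃! γhat : ℝ, G γhat = 0) ∧ (∀ γhat : ℝ, G γhat = 0 → 0 < γhat) := by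
  set φ : ℝ → ℝ := fun γ => Real.sqrt (2/3) * k (αtr + Real.sqrt (2/3) * γ)
  have hs : 0 ≤ Real.sqrt (2/3) := Real.sqrt_nonneg _
  have hc : 0 < 2 * μbb * (1 + h / (3 * μ)) := by positivity
  have hφ : Monotone φ :=
    (hk_mono.comp ((monotone_id.const_mul hs).const_add αtr)).const_mul hs
  have hG_eq : G = fun γ => x - 2 * μbb * (1 + h / (3 * μ)) * γ - φ γ := funext hG
  have hanti : StrictAnti G := hG_eq ▸ strictAnti_sub_mul_sub_of_monotone x hc hφ
  have hG0 : 0 < G 0 := by simpa [hG 0] using hftr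
  obtain ⟨γhat, hγhat⟩ :=
    exists_sub_mul_sub_eq_zero_of_monotone hc hφ (by fun_prop) (by simpa [φ] using hftr)
  have hzero : G γhat = 0 := by rw [hG_eq]; exact hγhat
  exact ⟨hanti, ⟨γhat, hzero, fun γ hγ => hanti.injective (hγ.trans hzero.symm)⟩,
    fun γ hγ => hanti.lt_iff_gt.mp (hγ ▸ hG0)⟩
end

section
/- Let κ > 0 and μ > 0, and define W on the open set of real 3×3 matrices F with det F > 0 by W(F) = (κ/2)·((1/2)((det F)^2 − 1) − ln(det F)) + (μ/2)·((det F)^{−2/3}·tr(F F^T) − 3). Then W is Fréchet differentiable at every such F, and its derivative in direction H is DW(F)[H] = tr((τ(F)·F^{−T})^T · H), where τ(F) = (κ/2)((det F)^2 − 1)·I + μ·dev((det F)^{−2/3} F F^T) and dev(A) = A − (tr(A)/3)·I. -/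
/-!
The energy depends on `F` only through `J = det F` and `q = tr (F Fᵀ)`. Since the determinant is
multilinear in the rows, its derivative replaces one row at a time, and cofactor expansion turns
this into Jacobi's formula `DJ[H] = tr (adj F · H) = J tr (F⁻¹ H)`; expanding `q (F + t H)` gives
`Dq[H] = 2 tr (Fᵀ H)`. The chain rule then writes `DW[H]` as `a tr (F⁻¹ H) + b tr (Fᵀ H)`, and
this is `tr ((τ F⁻ᵀ)ᵀ H)` because `τ = a I + b F Fᵀ` with `a = (κ/2)(J² - 1) - μ J^(-2/3) q / 3`
and `b = μ J^(-2/3)`.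
-/

attribute [local instance] Matrix.normedAddCommGroup Matrix.normedSpace

open Matrix

section Algebra

variable {n R : Type*} [Fintype n] [CommRing R]

theorem Matrix.trace_add_smul_mul_transpose_add_smul (A H : Matrix n n R) (t : R) :
    ((A + t • H) * (A + t • H)ᵀ).trace
      = (A * Aᵀ).trace + t * (2 * (Aᵀ * H).trace) + t ^ 2 * (H * Hᵀ).trace := by
  have hAH : (A * Hᵀ).trace = (Aᵀ * H).trace := by
    rw [← trace_transpose, transpose_mul, transpose_transpose, trace_mul_comm]
  simp only [transpose_add, transpose_smul, add_mul, mul_add, smul_mul, Matrix.mul_smul,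
    trace_add, trace_smul, smul_eq_mul, trace_mul_comm H Aᵀ, hAH]
  ring

variable [DecidableEq n]

theorem Matrix.det_updateRow_eq_sum_adjugate (A : Matrix n n R) (i : n) (b : n → R) :
    (A.updateRow i b).det = ∑ j, A.adjugate j i * b j := by
  rw [← cramer_transpose_apply, cramer_eq_adjugate_mulVec, ← adjugate_transpose]
  rfl

theorem Matrix.trace_transpose_mul_inv_transpose_mul {F : Matrix n n R} (hF : IsUnit F.det)
    (a b : R) (H : Matrix n n R) :
    (((a • 1 + b • (F * Fᵀ)) * F⁻¹ᵀ)ᵀ * H).trace = a * (F⁻¹ * H).trace + b * (Fᵀ * H).trace := by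
  have hFF : F * Fᵀ * F⁻¹ᵀ = F := by
    rw [Matrix.mul_assoc, ← transpose_mul, nonsing_inv_mul F hF, transpose_one, Matrix.mul_one]
  simp only [add_mul, smul_mul, Matrix.one_mul, hFF, transpose_add, transpose_smul,
    transpose_transpose, trace_add, trace_smul, smul_eq_mul]

end Algebra

section Calculus

variable {𝕜 : Type*} [NontriviallyNormedField 𝕜] {n : Type*} [Fintype n]

theorem Matrix.differentiable_trace_mul_transpose_self :
    Differentiable 𝕜 (fun M : Matrix n n 𝕜 => (M * Mᵀ).trace) := by
  simp only [trace, diag, mul_apply, transpose_apply]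
  fun_prop

theorem Matrix.fderiv_trace_mul_transpose_self_apply (A H : Matrix n n 𝕜) :
    fderiv 𝕜 (fun M : Matrix n n 𝕜 => (M * Mᵀ).trace) A H = 2 * (Aᵀ * H).trace := by
  have hline : HasLineDerivAt 𝕜 (fun M : Matrix n n 𝕜 => (M * Mᵀ).trace)
      (2 * (Aᵀ * H).trace) A H := by
    unfold HasLineDerivAt
    simp only [trace_add_smul_mul_transpose_add_smul]
    convert (((hasDerivAt_id' (0 : 𝕜)).mul_const (2 * (Aᵀ * H).trace)).const_add
      (A * Aᵀ).trace).fun_add ((hasDerivAt_pow 2 (0 : 𝕜)).mul_const (H * Hᵀ).trace) using 1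
    simp
  exact ((differentiable_trace_mul_transpose_self A).hasFDerivAt.hasLineDerivAt H).unique hline

variable [DecidableEq n]

def Matrix.detRowContinuousMultilinear : ContinuousMultilinearMap 𝕜 (fun _ : n => n → 𝕜) 𝕜 :=
  ⟨(detRowAlternating : (n → 𝕜) [⋀^n]→ₗ[𝕜] 𝕜).toMultilinearMap, continuous_id.matrix_det⟩

theorem Matrix.differentiable_det : Differentiable 𝕜 (det : Matrix n n 𝕜 → 𝕜) :=
  fun A => (detRowContinuousMultilinear.hasFDerivAt A).differentiableAt

theorem Matrix.fderiv_det_apply (A H : Matrix n n 𝕜) :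
    fderiv 𝕜 det A H = (A.adjugate * H).trace := by
  have h : fderiv 𝕜 (det : Matrix n n 𝕜 → 𝕜) A = detRowContinuousMultilinear.linearDeriv A :=
    (detRowContinuousMultilinear.hasFDerivAt A).fderiv
  rw [h]
  refine (ContinuousMultilinearMap.linearDeriv_apply _ _ _).trans ?_
  change ∑ i, (A.updateRow i (H i)).det = (A.adjugate * H).trace
  simp only [det_updateRow_eq_sum_adjugate, trace, diag, mul_apply]
  exact Finset.sum_comm

theorem Matrix.fderiv_det_apply_of_isUnit {A : Matrix n n 𝕜} (hA : IsUnit A.det)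
    (H : Matrix n n 𝕜) : fderiv 𝕜 det A H = A.det * (A⁻¹ * H).trace := by
  rw [fderiv_det_apply, inv_def, Ring.inverse_eq_inv', smul_mul, trace_smul, smul_eq_mul,
    mul_inv_cancel_left₀ hA.ne_zero]

end Calculus

theorem strain_energy_hasDeriv_general
    (κ μ : ℝ)
    (W : Matrix (Fin 3) (Fin 3) ℝ → ℝ)
    (hW : ∀ F : Matrix (Fin 3) (Fin 3) ℝ, 0 < F.det →
      W F = (κ/2) * ((1/2) * (F.det ^ 2 - 1) - Real.log F.det)
        + (μ/2) * ((F.det ^ (-(2 : ℝ)/3)) * (F * F.transpose).trace - 3))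
    (τ : Matrix (Fin 3) (Fin 3) ℝ → Matrix (Fin 3) (Fin 3) ℝ)
    (hτ : ∀ F : Matrix (Fin 3) (Fin 3) ℝ,
      τ F = ((κ/2) * (F.det ^ 2 - 1)) • (1 : Matrix (Fin 3) (Fin 3) ℝ)
        + μ • ((F.det ^ (-(2 : ℝ)/3)) • (F * F.transpose)
            - ((((F.det ^ (-(2 : ℝ)/3)) • (F * F.transpose)).trace / 3)
                • (1 : Matrix (Fin 3) (Fin 3) ℝ)))) :
    ∀ F : Matrix (Fin 3) (Fin 3) ℝ, 0 < F.det →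
      DifferentiableAt ℝ W F ∧
      ∀ H : Matrix (Fin 3) (Fin 3) ℝ,
        fderiv ℝ W F H = ((τ F * F⁻¹.transpose).transpose * H).trace := by
  intro F hF
  have hJ := (differentiable_det (𝕜 := ℝ) F).hasFDerivAt
  have hq := (differentiable_trace_mul_transpose_self (𝕜 := ℝ) F).hasFDerivAt
  have hWF : W =ᶠ[nhds F] fun M => (κ/2) * ((1/2) * (M.det ^ 2 - 1) - Real.log M.det)
      + (μ/2) * ((M.det ^ (-(2 : ℝ)/3)) * (M * M.transpose).trace - 3) :=
    Filter.eventually_of_mem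
      ((isOpen_lt continuous_const (differentiable_det (𝕜 := ℝ)).continuous).mem_nhds hF) hW
  have hWderiv := ((((((hJ.pow 2).sub_const 1).const_mul (1 / 2)).sub (hJ.log hF.ne')).const_mul
      (κ / 2)).add ((((hJ.rpow_const (p := -(2 : ℝ) / 3) (Or.inl hF.ne')).mul hq).sub_const
      3).const_mul (μ / 2))).congr_of_eventuallyEq hWF
  refine ⟨hWderiv.differentiableAt, fun H => ?_⟩
  -- `rfl`, not `simp`: the chain rule types these maps with the normed-space topology on
  -- matrices, the statement's `fderiv` with `Matrix`'s own topology.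
  have hDW : fderiv ℝ W F H = (κ / 2) * ((1 / 2) * ((2 • F.det ^ (2 - 1)) * fderiv ℝ det F H)
        - F.det⁻¹ * fderiv ℝ det F H)
      + (μ / 2) * (F.det ^ (-(2 : ℝ) / 3) * fderiv ℝ (fun M : Matrix _ _ ℝ => (M * Mᵀ).trace) F H
        + (F * Fᵀ).trace * ((-(2 : ℝ) / 3 * F.det ^ (-(2 : ℝ) / 3 - 1)) * fderiv ℝ det F H)) := by
    rw [show fderiv ℝ W F H = _ from DFunLike.congr_fun hWderiv.fderiv H]
    rfl
  have hτF : τ F = ((κ/2) * (F.det ^ 2 - 1) - μ * (F.det ^ (-(2 : ℝ)/3) * (F * Fᵀ).trace / 3)) • 1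
      + (μ * F.det ^ (-(2 : ℝ)/3)) • (F * Fᵀ) := by
    rw [hτ, trace_smul, smul_eq_mul]
    module
  rw [hDW, hτF, trace_transpose_mul_inv_transpose_mul (isUnit_iff_ne_zero.2 hF.ne'),
    fderiv_det_apply_of_isUnit (isUnit_iff_ne_zero.2 hF.ne'),
    fderiv_trace_mul_transpose_self_apply, Real.rpow_sub_one hF.ne']
  field_simp
  ring

/-- Fréchet differentiability of the strain energy
`W(F) = (κ/2)((1/2)((det F)² − 1) − ln det F) + (μ/2)((det F)^{−2/3} tr(F Fᵀ) − 3)`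
on the set `det F > 0`, with derivative `DW(F)[H] = tr((τ(F) F^{−T})ᵀ H)`, where
`τ(F) = (κ/2)((det F)² − 1)·I + μ·dev((det F)^{−2/3} F Fᵀ)` and
`dev A = A − (tr A / 3)·I`. -/
theorem strain_energy_hasDeriv
    (κ μ : ℝ) (hκ : 0 < κ) (hμ : 0 < μ)
    (W : Matrix (Fin 3) (Fin 3) ℝ → ℝ)
    (hW : ∀ F : Matrix (Fin 3) (Fin 3) ℝ, 0 < F.det →
      W F = (κ/2) * ((1/2) * (F.det ^ 2 - 1) - Real.log F.det)
        + (μ/2) * ((F.det ^ (-(2 : ℝ)/3)) * (F * F.transpose).trace - 3))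
    (τ : Matrix (Fin 3) (Fin 3) ℝ → Matrix (Fin 3) (Fin 3) ℝ)
    (hτ : ∀ F : Matrix (Fin 3) (Fin 3) ℝ,
      τ F = ((κ/2) * (F.det ^ 2 - 1)) • (1 : Matrix (Fin 3) (Fin 3) ℝ)
        + μ • ((F.det ^ (-(2 : ℝ)/3)) • (F * F.transpose)
            - ((((F.det ^ (-(2 : ℝ)/3)) • (F * F.transpose)).trace / 3)
                • (1 : Matrix (Fin 3) (Fin 3) ℝ)))) :
    ∀ F : Matrix (Fin 3) (Fin 3) ℝ, 0 < F.det →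
      DifferentiableAt ℝ W F ∧
      ∀ H : Matrix (Fin 3) (Fin 3) ℝ,
        fderiv ℝ W F H = ((τ F * F⁻¹.transpose).transpose * H).trace :=
  strain_energy_hasDeriv_general κ μ W hW τ hτ
end

section
/- Let F_n, F_{n+1}, F_n^e, F_n^p be invertible real 3×3 matrices with F_n = F_n^e F_n^p, det F_n > 0, det F_{n+1} > 0, and det F_n^p = 1. Set f = F_{n+1} F_n^{−1}, f̄ = (det f)^{−1/3} f, b̄_n^e = (det F_n^e)^{−2/3}·F_n^e (F_n^e)^T, and C_n^p = (F_n^p)^T F_n^p. Then f̄ · b̄_n^e · f̄^T = (det F_{n+1})^{−2/3} · F_{n+1} (C_n^p)^{−1} F_{n+1}^T. -/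
/-- Trial-state identity (equation 'be-bar Trial'): under the multiplicative
decomposition `F_n = Fₙᵉ Fₙᵖ` with isochoric plastic flow `det Fₙᵖ = 1`, one has
`f̄ b̄ₙᵉ f̄ᵀ = (det F_{n+1})^{−2/3} F_{n+1} (Cₙᵖ)⁻¹ F_{n+1}ᵀ`, where
`f = F_{n+1} Fₙ⁻¹`, `f̄ = (det f)^{−1/3} f`,
`b̄ₙᵉ = (det Fₙᵉ)^{−2/3} Fₙᵉ (Fₙᵉ)ᵀ` and `Cₙᵖ = (Fₙᵖ)ᵀ Fₙᵖ`. -/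
theorem trial_be_bar_identity
    (Fn Fn1 Fne Fnp f fbar bbar Cnp : Matrix (Fin 3) (Fin 3) ℝ)
    (hdec : Fn = Fne * Fnp)
    (hFn : 0 < Fn.det) (hFn1 : 0 < Fn1.det) (hFnp : Fnp.det = 1)
    (hf : f = Fn1 * Fn⁻¹)
    (hfbar : fbar = (f.det ^ (-(1 : ℝ)/3)) • f)
    (hbbar : bbar = (Fne.det ^ (-(2 : ℝ)/3)) • (Fne * Fne.transpose))
    (hCnp : Cnp = Fnp.transpose * Fnp) :
    fbar * bbar * fbar.transpose
      = (Fn1.det ^ (-(2 : ℝ)/3)) • (Fn1 * Cnp⁻¹ * Fn1.transpose) := by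
  have hFnunit : IsUnit Fn.det := isUnit_iff_ne_zero.mpr hFn.ne'
  have hFnpunit : IsUnit Fnp.det := by rw [hFnp]; exact isUnit_one
  have hFne_det : Fne.det = Fn.det := by
    rw [hdec, Matrix.det_mul, hFnp, mul_one]
  have hFneunit : IsUnit Fne.det := hFne_det ▸ hFnunit
  have hfdet : f.det = Fn1.det * Fn.det⁻¹ := by
    rw [hf, Matrix.det_mul, Matrix.det_nonsing_inv, Ring.inverse_eq_inv']
  have hfpos : 0 < f.det := by
    rw [hfdet]; exact mul_pos hFn1 (inv_pos.mpr hFn)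
  -- matrix identity
  have hfFne : f * Fne = Fn1 * Fnp⁻¹ := by
    rw [hf, hdec, Matrix.mul_inv_rev, mul_assoc, mul_assoc,
      Matrix.nonsing_inv_mul Fne hFneunit, mul_one]
  have hCinv : Cnp⁻¹ = Fnp⁻¹ * (Fnp⁻¹).transpose := by
    rw [hCnp, Matrix.mul_inv_rev, Matrix.transpose_nonsing_inv]
  have hM : f * (Fne * Fne.transpose) * f.transpose
      = Fn1 * Cnp⁻¹ * Fn1.transpose := by
    have : f * (Fne * Fne.transpose) * f.transpose
        = (f * Fne) * (f * Fne).transpose := by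
      rw [Matrix.transpose_mul]; simp only [mul_assoc]
    rw [this, hfFne, Matrix.transpose_mul, hCinv]; simp only [mul_assoc]
  -- scalar identity
  have hscal : f.det ^ (-(1:ℝ)/3) * (Fne.det ^ (-(2:ℝ)/3) * f.det ^ (-(1:ℝ)/3))
      = Fn1.det ^ (-(2:ℝ)/3) := by
    have h1 : f.det ^ (-(1:ℝ)/3) * f.det ^ (-(1:ℝ)/3) = f.det ^ (-(2:ℝ)/3) := by
      rw [← Real.rpow_add hfpos]; norm_num
    have h2 : f.det ^ (-(2:ℝ)/3) * Fne.det ^ (-(2:ℝ)/3)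
        = (f.det * Fne.det) ^ (-(2:ℝ)/3) := by
      rw [← Real.mul_rpow hfpos.le (hFne_det ▸ hFn).le]
    have h3 : f.det * Fne.det = Fn1.det := by
      rw [hfdet, hFne_det]
      field_simp
    calc f.det ^ (-(1:ℝ)/3) * (Fne.det ^ (-(2:ℝ)/3) * f.det ^ (-(1:ℝ)/3))
        = (f.det ^ (-(1:ℝ)/3) * f.det ^ (-(1:ℝ)/3)) * Fne.det ^ (-(2:ℝ)/3) := by ring
      _ = Fn1.det ^ (-(2:ℝ)/3) := by rw [h1, h2, h3]
  rw [hfbar, hbbar, Matrix.transpose_smul]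
  simp only [Matrix.smul_mul, Matrix.mul_smul, smul_smul]
  rw [hM]
  rw [show f.det ^ (-(1:ℝ)/3) * (Fne.det ^ (-(2:ℝ)/3) * f.det ^ (-(1:ℝ)/3)) = Fn1.det ^ (-(2:ℝ)/3) from hscal]
end

section
/- Let p, m, N be positive natural numbers, ζ₀ ∈ ℝ^p, V₀ ∈ ℝ^m a constant, and for n = 1, …, N let R_n : ℝ^p × ℝ^m × ℝ^m → ℝ^m and V_n : ℝ^p → ℝ^m be maps, differentiable at the relevant points, satisfying R_n(ζ, V_n(ζ), V_{n−1}(ζ)) = 0 for all ζ in a neighborhood of ζ₀ (with V₀(ζ) ≡ V₀). Let F : ℝ^p × (ℝ^m)^N → ℝ be differentiable at (ζ₀, V₁(ζ₀), …, V_N(ζ₀)). Write A_n, B_{n+1}, C_n for the partial Fréchet derivatives of R_n with respect to its second argument, of R_{n+1} with respect to its third argument, and of R_n with respect to ζ, all evaluated at (ζ₀, V_n(ζ₀), V_{n−1}(ζ₀)) (respectively (ζ₀, V_{n+1}(ζ₀), V_n(ζ₀))), and write ∂F/∂ζ, ∂F/∂V_n for the partial derivatives of F at the same base point. Suppose λ₁,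 …, λ_N ∈ ℝ^m satisfy the adjoint equations A_n^T λ_n + B_{n+1}^T λ_{n+1} = −∂F/∂V_n for n = 1, …, N−1 and A_N^T λ_N = −∂F/∂V_N. Then the gradient at ζ₀ of the reduced function ζ ↦ F(ζ, V₁(ζ), …, V_N(ζ)) equals ∂F/∂ζ + Σ_{n=1}^{N} C_n^T λ_n. -/
/-!
Differentiating the residual identity `R n ζ (V n ζ) (V (n - 1) ζ) = 0` at `ζ₀` in a direction `u`
gives `Cₙ u + Aₙ δₙ + Bₙ δₙ₋₁ = 0` with `δₙ = V'ₙ u` and `δ₀ = 0`, while the chain rule writes the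
derivative of the reduced objective as `∂𝓕/∂ζ u + Σₙ ⟪∂𝓕/∂Vₙ, δₙ⟫`. Pairing the residual identities
with `λₙ` and regrouping the sum so that each `δₙ` meets `Aₙᵀλₙ + Bₙ₊₁ᵀλₙ₊₁` (a summation by parts,
using `δ₀ = 0`), the adjoint equations turn `Σₙ ⟪λₙ, Cₙ u⟫` into `Σₙ ⟪∂𝓕/∂Vₙ, δₙ⟫`, so the
unknown state sensitivities `δₙ` drop out.
-/

open Finset Function
open scoped RealInnerProductSpace

section Calculus

variable {𝕜 : Type*} [NontriviallyNormedField 𝕜]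
  {E F G H : Type*} [NormedAddCommGroup E] [NormedSpace 𝕜 E] [NormedAddCommGroup F]
  [NormedSpace 𝕜 F] [NormedAddCommGroup G] [NormedSpace 𝕜 G] [NormedAddCommGroup H]
  [NormedSpace 𝕜 H]

theorem fderiv_prod_apply_eq_add {f : E × F → G} {x : E} {y : F}
    (hf : DifferentiableAt 𝕜 f (x, y)) (u : E) (v : F) :
    fderiv 𝕜 f (x, y) (u, v) =
      fderiv 𝕜 (fun a => f (a, y)) x u + fderiv 𝕜 (fun b => f (x, b)) y v := by
  rw [fderiv_fun_comp x (f := fun a => (a, y)) hf (hasFDerivAt_prodMk_left x y).differentiableAt,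
    fderiv_fun_comp y (f := fun b => (x, b)) hf (hasFDerivAt_prodMk_right x y).differentiableAt,
    (hasFDerivAt_prodMk_left x y).fderiv, (hasFDerivAt_prodMk_right x y).fderiv]
  simp [← map_add]

theorem fderiv_pi_apply_eq_sum {ι : Type*} [Fintype ι] [DecidableEq ι] {g : (ι → F) → G}
    {w : ι → F} (hg : DifferentiableAt 𝕜 g w) (v : ι → F) :
    fderiv 𝕜 g w v = ∑ i, fderiv 𝕜 (fun b => g (update w i b)) (w i) (v i) := by
  have hpartial (i : ι) : fderiv 𝕜 (fun b => g (update w i b)) (w i) (v i) =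
      fderiv 𝕜 g w (Pi.single i (v i)) := by
    have hg' : DifferentiableAt 𝕜 g (update w i (w i)) := by rwa [update_eq_self]
    rw [fderiv_fun_comp (w i) hg' (hasFDerivAt_update w (w i)).differentiableAt, fderiv_update,
      update_eq_self, ContinuousLinearMap.comp_apply]
    congr 1
    funext j
    rcases eq_or_ne j i with rfl | hji <;> simp [*]
  simp_rw [hpartial, ← map_sum, univ_sum_single]

theorem fderiv_comp_prodMk_apply {f : E × F → G} {y : E → F} {x : E}
    (hf : DifferentiableAt 𝕜 f (x, y x)) (hy : DifferentiableAt 𝕜 y x) (u : E) :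
    fderiv 𝕜 (fun a => f (a, y a)) x u = fderiv 𝕜 f (x, y x) (u, fderiv 𝕜 y x u) := by
  rw [fderiv_fun_comp x (f := fun a => (a, y a)) hf (differentiableAt_id.prodMk hy),
    DifferentiableAt.fderiv_prodMk (f₁ := fun a => a) differentiableAt_fun_id hy]
  simp

theorem fderiv_partial_add_partial_add_partial_eq_zero {f : E × F × G → H} {y : E → F}
    {z : E → G} {x : E} (hf : DifferentiableAt 𝕜 f (x, y x, z x))
    (hy : DifferentiableAt 𝕜 y x) (hz : DifferentiableAt 𝕜 z x)
    (h₀ : ∀ᶠ a in nhds x, f (a, y a, z a) = 0) (u : E) :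
    fderiv 𝕜 (fun a => f (a, y x, z x)) x u
      + fderiv 𝕜 (fun b => f (x, b, z x)) (y x) (fderiv 𝕜 y x u)
      + fderiv 𝕜 (fun c => f (x, y x, c)) (z x) (fderiv 𝕜 z x u) = 0 := by
  have hconst : fderiv 𝕜 (fun a => f (a, y a, z a)) x = 0 := by
    rw [Filter.EventuallyEq.fderiv_eq h₀]; exact fderiv_const_apply 0
  have hf' : DifferentiableAt 𝕜 (fun q : F × G => f (x, q)) (y x, z x) :=
    hf.comp (y x, z x) (hasFDerivAt_prodMk_right x (y x, z x)).differentiableAt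
  calc _ = fderiv 𝕜 (fun a => f (a, y a, z a)) x u := by
        rw [fderiv_comp_prodMk_apply hf (hy.prodMk hz), fderiv_prod_apply_eq_add hf,
          hy.fderiv_prodMk hz, ContinuousLinearMap.prod_apply, fderiv_prod_apply_eq_add hf',
          add_assoc]
    _ = 0 := by rw [hconst]; rfl

theorem fderiv_comp_prodMk_pi_apply {ι : Type*} [Fintype ι] [DecidableEq ι]
    {f : E × (ι → F) → G} {y : ι → E → F} {x : E}
    (hf : DifferentiableAt 𝕜 f (x, fun i => y i x)) (hy : ∀ i, DifferentiableAt 𝕜 (y i) x)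
    (u : E) :
    fderiv 𝕜 (fun a => f (a, fun i => y i a)) x u =
      fderiv 𝕜 (fun a => f (a, fun i => y i x)) x u
        + ∑ i, fderiv 𝕜 (fun b => f (x, update (fun j => y j x) i b)) (y i x)
            (fderiv 𝕜 (y i) x u) := by
  have hf' : DifferentiableAt 𝕜 (fun w : ι → F => f (x, w)) (fun i => y i x) :=
    hf.comp _ (hasFDerivAt_prodMk_right x _).differentiableAt
  rw [fderiv_comp_prodMk_apply (y := fun a i => y i a) hf (differentiableAt_pi.2 hy),
    fderiv_prod_apply_eq_add hf, fderiv_pi_apply_eq_sum hf', fderiv_pi hy]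
  rfl

end Calculus

theorem sum_range_add_eq_of_add_shift_eq {G : Type*} [AddCommMonoid G] (M : ℕ) (a b t : ℕ → G)
    (hb : b 0 = 0) (hmid : ∀ i < M, a i + b (i + 1) = t i) (hlast : a M = t M) :
    ∑ i ∈ range (M + 1), (a i + b i) = ∑ i ∈ range (M + 1), t i := by
  rw [sum_add_distrib, sum_range_succ a, sum_range_succ' b, sum_range_succ t, hb, hlast,
    ← sum_congr rfl fun i hi => hmid i (mem_range.1 hi), sum_add_distrib]
  abel

theorem sum_inner_eq_sum_inner_of_adjoint_eq {F H : Type*} [NormedAddCommGroup F]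
    [InnerProductSpace ℝ F] [CompleteSpace F] [NormedAddCommGroup H] [InnerProductSpace ℝ H]
    [CompleteSpace H] (N : ℕ) (A B : ℕ → F →L[ℝ] H) (δ g : ℕ → F) (c lam : ℕ → H)
    (hδ : δ 0 = 0) (hres : ∀ n, 1 ≤ n → n ≤ N → c n + A n (δ n) + B n (δ (n - 1)) = 0)
    (hadj : ∀ n, 1 ≤ n → n < N →
      (A n).adjoint (lam n) + (B (n + 1)).adjoint (lam (n + 1)) = -g n)
    (hadjN : (A N).adjoint (lam N) = -g N) :
    ∑ i ∈ range N, ⟪lam (i + 1), c (i + 1)⟫ = ∑ i ∈ range N, ⟪g (i + 1), δ (i + 1)⟫ := by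
  obtain _ | M := N
  · simp
  have hc (i : ℕ) (hi : i < M + 1) : ⟪lam (i + 1), c (i + 1)⟫ =
      -(⟪(A (i + 1)).adjoint (lam (i + 1)), δ (i + 1)⟫
        + ⟪(B (i + 1)).adjoint (lam (i + 1)), δ i⟫) := by
    have hci : c (i + 1) = -(A (i + 1) (δ (i + 1)) + B (i + 1) (δ i)) := by
      rw [eq_neg_iff_add_eq_zero, ← add_assoc]
      exact hres (i + 1) (by omega) (by omega)
    rw [hci, inner_neg_right, inner_add_right, ContinuousLinearMap.adjoint_inner_left,
      ContinuousLinearMap.adjoint_inner_left]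
  have hsum := sum_range_add_eq_of_add_shift_eq M
    (fun i => ⟪(A (i + 1)).adjoint (lam (i + 1)), δ (i + 1)⟫)
    (fun i => ⟪(B (i + 1)).adjoint (lam (i + 1)), δ i⟫)
    (fun i => -⟪g (i + 1), δ (i + 1)⟫)
    (by simp [hδ])
    (fun i hi => by rw [← inner_add_left, hadj (i + 1) (by omega) (by omega), inner_neg_left])
    (by rw [hadjN, inner_neg_left])
  rw [sum_congr rfl fun i hi => hc i (mem_range.1 hi), sum_neg_distrib, hsum, sum_neg_distrib,
    neg_neg]

/-- History-dependent (reversed) adjoint sensitivity formula: given residual maps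
`R n` satisfying `R n ζ (V n ζ) (V (n-1) ζ) = 0` near `ζ₀` (with `V 0` constant),
an objective `𝓕` of the design variable and the states `V 1 ζ, …, V N ζ`, and
adjoint vectors `λ 1, …, λ N` solving the backward adjoint equations
`Aₙᵀ λₙ + Bₙ₊₁ᵀ λₙ₊₁ = −∂𝓕/∂Vₙ` (`n = 1, …, N−1`) and `A_Nᵀ λ_N = −∂𝓕/∂V_N`,
the gradient of the reduced objective `ζ ↦ 𝓕(ζ, V 1 ζ, …, V N ζ)` at `ζ₀` equals
`∂𝓕/∂ζ + Σₙ Cₙᵀ λₙ`, where `Aₙ`, `Bₙ₊₁`, `Cₙ` are the partial Fréchet derivatives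
of the residuals with respect to the current state, previous state, and design
variable, and `ᵀ` denotes the adjoint. -/
theorem adjoint_sensitivity
    (p m N : ℕ) (hN : 0 < N)
    (ζ₀ : EuclideanSpace ℝ (Fin p))
    (V : ℕ → EuclideanSpace ℝ (Fin p) → EuclideanSpace ℝ (Fin m))
    (hV0 : ∀ ζ, V 0 ζ = V 0 ζ₀)
    (R : ℕ → EuclideanSpace ℝ (Fin p) → EuclideanSpace ℝ (Fin m) →
        EuclideanSpace ℝ (Fin m) → EuclideanSpace ℝ (Fin m))
    (hres : ∀ n, 1 ≤ n → n ≤ N →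
      ∀ᶠ ζ in nhds ζ₀, R n ζ (V n ζ) (V (n - 1) ζ) = 0)
    (hVdiff : ∀ n, n ≤ N → DifferentiableAt ℝ (V n) ζ₀)
    (hRdiff : ∀ n, 1 ≤ n → n ≤ N →
      DifferentiableAt ℝ
        (fun q : EuclideanSpace ℝ (Fin p) × EuclideanSpace ℝ (Fin m) ×
            EuclideanSpace ℝ (Fin m) => R n q.1 q.2.1 q.2.2)
        (ζ₀, V n ζ₀, V (n - 1) ζ₀))
    (𝓕 : EuclideanSpace ℝ (Fin p) × (Fin N → EuclideanSpace ℝ (Fin m)) → ℝ)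
    (h𝓕diff : DifferentiableAt ℝ 𝓕 (ζ₀, fun i : Fin N => V ((i : ℕ) + 1) ζ₀))
    (lam : ℕ → EuclideanSpace ℝ (Fin m))
    (hadj : ∀ n (h1 : 1 ≤ n) (h2 : n ≤ N - 1),
      ContinuousLinearMap.adjoint
          (fderiv ℝ (fun x => R n ζ₀ x (V (n - 1) ζ₀)) (V n ζ₀)) (lam n)
        + ContinuousLinearMap.adjoint
          (fderiv ℝ (fun y => R (n + 1) ζ₀ (V (n + 1) ζ₀) y) (V n ζ₀)) (lam (n + 1))
        = - gradient
            (fun w => 𝓕 (ζ₀, Function.update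
              (fun i : Fin N => V ((i : ℕ) + 1) ζ₀) (⟨n - 1, by omega⟩ : Fin N) w))
            (V n ζ₀))
    (hadjN :
      ContinuousLinearMap.adjoint
          (fderiv ℝ (fun x => R N ζ₀ x (V (N - 1) ζ₀)) (V N ζ₀)) (lam N)
        = - gradient
            (fun w => 𝓕 (ζ₀, Function.update
              (fun i : Fin N => V ((i : ℕ) + 1) ζ₀) (⟨N - 1, by omega⟩ : Fin N) w))
            (V N ζ₀)) :
    gradient (fun ζ => 𝓕 (ζ, fun i : Fin N => V ((i : ℕ) + 1) ζ)) ζ₀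
      = gradient (fun ζ => 𝓕 (ζ, fun i : Fin N => V ((i : ℕ) + 1) ζ₀)) ζ₀
        + ∑ i : Fin N,
            ContinuousLinearMap.adjoint
              (fderiv ℝ
                (fun ζ => R ((i : ℕ) + 1) ζ (V ((i : ℕ) + 1) ζ₀) (V (i : ℕ) ζ₀)) ζ₀)
              (lam ((i : ℕ) + 1)) := by
  -- `∂𝓕/∂Vₙ`, reindexed by `n : ℕ` like the adjoint equations; the junk value `0` is never used
  let g (n : ℕ) : EuclideanSpace ℝ (Fin m) := if h : n - 1 < N then
    gradient (fun w => 𝓕 (ζ₀, update (fun i : Fin N => V (i + 1) ζ₀) ⟨n - 1, h⟩ w)) (V n ζ₀)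
    else 0
  refine ext_inner_right ℝ fun u => ?_
  have hkey := sum_inner_eq_sum_inner_of_adjoint_eq N
    (fun n => fderiv ℝ (fun x => R n ζ₀ x (V (n - 1) ζ₀)) (V n ζ₀))
    (fun n => fderiv ℝ (fun y => R n ζ₀ (V n ζ₀) y) (V (n - 1) ζ₀))
    (fun n => fderiv ℝ (V n) ζ₀ u) g
    (fun n => fderiv ℝ (fun ζ => R n ζ (V n ζ₀) (V (n - 1) ζ₀)) ζ₀ u) lam
    (by rw [funext hV0, fderiv_const_apply]; rfl)
    (fun n h1 h2 => fderiv_partial_add_partial_add_partial_eq_zero (hRdiff n h1 h2)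
      (hVdiff n h2) (hVdiff (n - 1) (by omega)) (hres n h1 h2) u)
    (fun n h1 h2 => by simpa [g, show n - 1 < N by omega] using hadj n h1 (by omega))
    (by simpa [g, show N - 1 < N by omega] using hadjN)
  rw [inner_add_left, sum_inner, inner_gradient_left, inner_gradient_left,
    fderiv_comp_prodMk_pi_apply h𝓕diff (fun i => hVdiff _ i.isLt) u]
  simp only [ContinuousLinearMap.adjoint_inner_left]
  congr 1
  simp only [Nat.add_sub_cancel] at hkey
  rw [Fin.sum_univ_eq_sum_range (fun i => ⟪lam (i + 1),
      fderiv ℝ (fun ζ => R (i + 1) ζ (V (i + 1) ζ₀) (V i ζ₀)) ζ₀ u⟫), hkey,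
    ← Fin.sum_univ_eq_sum_range (fun i => ⟪g (i + 1), fderiv ℝ (V (i + 1)) ζ₀ u⟫)]
  refine sum_congr rfl fun i _ => ?_
  simp [g, inner_gradient_left]
end
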